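/- If f :⊆ X ⇉ Y is densely realized with Y having a total representation, and g :⊆ Z ⇉ ℕ satisfies g ≤_W f, then g is computable. -/

import Mathlib

open scoped Classical

/-! ## Basic notions of Weihrauch complexity -/

/-- The finite prefix of length `m` of a point of Baire space, as a list. -/
def pref (p : ℕ → ℕ) (m : ℕ) : List ℕ := List.ofFn (fun i : Fin m => p i)

/-- Type-2 computability of a partial function on Baire space, defined via monotone
computable word functions producing longer and longer prefixes of the output. -/
def BaireComputable (F : (ℕ → ℕ) →. (ℕ → ℕ)) : Prop :=
  ∃ ψ : List ℕ → List ℕ, Computable ψ ∧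
    (∀ u v : List ℕ, u <+: v → ψ u <+: ψ v) ∧
    ∀ p q, q ∈ F p → ∀ n, ∃ m, (ψ (pref p m))[n]? = some (q n)

/-- The interleaving pairing `⟨p,q⟩` on Baire space. -/
def pairB (p q : ℕ → ℕ) : ℕ → ℕ := fun n => if n % 2 = 0 then p (n / 2) else q (n / 2)

def evenPart (r : ℕ → ℕ) : ℕ → ℕ := fun n => r (2 * n)

def oddPart (r : ℕ → ℕ) : ℕ → ℕ := fun n => r (2 * n + 1)

/-- The `i`-th component of the countable tupling `⟨p₀,p₁,…⟩⟨i,k⟩ = pᵢ(k)`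
(using the Cantor pairing). -/
def proj (r : ℕ → ℕ) (i : ℕ) : ℕ → ℕ := fun k => r (Nat.pair i k)

/-- A represented space: a set `X` together with a surjective partial map
from Baire space onto `X`. -/
structure RepSp (X : Type*) where
  δ : (ℕ → ℕ) →. X
  surj : ∀ x : X, ∃ p, x ∈ δ p

theorem mem_part_mk {α : Type*} {D : Prop} {g : D → α} {a : α} (h : D) (e : g h = a) :
    a ∈ Part.mk D g := Part.mem_mk_iff.mpr ⟨h, e⟩

/-- The identity representation of Baire space. -/
def repBaire : RepSp (ℕ → ℕ) where
  δ := fun p => Part.some p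
  surj := fun p => ⟨p, Part.mem_some p⟩

/-- The standard representation of the natural numbers. -/
def repNat : RepSp ℕ where
  δ := fun p => Part.some (p 0)
  surj := fun n => ⟨fun _ => n, Part.mem_some n⟩

/-- `F` is a realizer of the problem `f :⊆ X ⇉ Y` (a problem is a multi-valued
function `f : X → Set Y`, whose domain is the set of `x` with `f x` nonempty). -/
def Realizes {X Y : Type*} (δX : RepSp X) (δY : RepSp Y)
    (f : X → Set Y) (F : (ℕ → ℕ) →. (ℕ → ℕ)) : Prop :=
  ∀ p x, x ∈ δX.δ p → (f x).Nonempty → ∃ q ∈ F p, ∃ y ∈ δY.δ q, y ∈ f x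

/-- Weihrauch reducibility: `f ≤_W g` iff there are computable `H, K` such that
`p ↦ H⟨p, G(K(p))⟩` realizes `f` whenever `G` realizes `g`. -/
def WRed {X Y Z W : Type*} (δX : RepSp X) (δY : RepSp Y) (δZ : RepSp Z) (δW : RepSp W)
    (f : X → Set Y) (g : Z → Set W) : Prop :=
  ∃ H K : (ℕ → ℕ) →. (ℕ → ℕ), BaireComputable H ∧ BaireComputable K ∧
    ∀ G : (ℕ → ℕ) →. (ℕ → ℕ), Realizes δZ δW g G →
      Realizes δX δY f
        (fun p => (K p).bind fun r => (G r).bind fun q => H (pairB p q))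

/-- Strong Weihrauch reducibility: `f ≤_sW g` iff there are computable `H, K`
such that `H ∘ G ∘ K` realizes `f` whenever `G` realizes `g`. -/
def SWRed {X Y Z W : Type*} (δX : RepSp X) (δY : RepSp Y) (δZ : RepSp Z) (δW : RepSp W)
    (f : X → Set Y) (g : Z → Set W) : Prop :=
  ∃ H K : (ℕ → ℕ) →. (ℕ → ℕ), BaireComputable H ∧ BaireComputable K ∧
    ∀ G : (ℕ → ℕ) →. (ℕ → ℕ), Realizes δZ δW g G →
      Realizes δX δY f (fun p => (K p).bind fun r => (G r).bind fun q => H q)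

/-- Weihrauch equivalence. -/
def WEquiv {X Y Z W : Type*} (δX : RepSp X) (δY : RepSp Y) (δZ : RepSp Z) (δW : RepSp W)
    (f : X → Set Y) (g : Z → Set W) : Prop :=
  WRed δX δY δZ δW f g ∧ WRed δZ δW δX δY g f

/-- Strong Weihrauch equivalence. -/
def SWEquiv {X Y Z W : Type*} (δX : RepSp X) (δY : RepSp Y) (δZ : RepSp Z) (δW : RepSp W)
    (f : X → Set Y) (g : Z → Set W) : Prop :=
  SWRed δX δY δZ δW f g ∧ SWRed δZ δW δX δY g f

/-- The identity problem on Baire space. -/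
def idProblem : (ℕ → ℕ) → Set (ℕ → ℕ) := fun p => {p}

/-! ## Constructions on representations and problems -/

/-- Representation of the product of two represented spaces. -/
def prodRep {X Z : Type*} (δX : RepSp X) (δZ : RepSp Z) : RepSp (X × Z) where
  δ := fun r => (δX.δ (evenPart r)).bind fun x => (δZ.δ (oddPart r)).map fun z => (x, z)
  surj := by
    intro xz
    obtain ⟨p, hp⟩ := δX.surj xz.1
    obtain ⟨q, hq⟩ := δZ.surj xz.2
    have he : evenPart (pairB p q) = p := by
      funext n
      have h1 : (2 * n) % 2 = 0 := by omega
      have h2 : (2 * n) / 2 = n := by omega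
      simp [evenPart, pairB, h1, h2]
    have ho : oddPart (pairB p q) = q := by
      funext n
      have h1 : ¬((2 * n + 1) % 2 = 0) := by omega
      have h2 : (2 * n + 1) / 2 = n := by omega
      simp [oddPart, pairB, h1, h2]
    refine ⟨pairB p q, Part.mem_bind_iff.mpr ⟨xz.1, by rw [he]; exact hp,
      (Part.mem_map_iff _).mpr ⟨xz.2, by rw [ho]; exact hq, rfl⟩⟩⟩

/-- The product `f × g` of two problems. -/
def prodProblem {X Y Z W : Type*} (f : X → Set Y) (g : Z → Set W) :
    X × Z → Set (Y × W) :=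
  fun xz => f xz.1 ×ˢ g xz.2

/-- Representation of the disjoint union of two represented spaces. -/
def sumRep {X Z : Type*} (δX : RepSp X) (δZ : RepSp Z) : RepSp (X ⊕ Z) where
  δ := fun r =>
    if r 0 = 0 then (δX.δ fun n => r (n + 1)).map Sum.inl
    else if r 0 = 1 then (δZ.δ fun n => r (n + 1)).map Sum.inr
    else Part.none
  surj := by
    rintro (x | z)
    · obtain ⟨p, hp⟩ := δX.surj x
      refine ⟨fun n => Nat.casesOn n 0 p, ?_⟩
      show Sum.inl x ∈ (δX.δ p).map Sum.inl
      exact (Part.mem_map_iff _).mpr ⟨x, hp, rfl⟩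
    · obtain ⟨p, hp⟩ := δZ.surj z
      refine ⟨fun n => Nat.casesOn n 1 p, ?_⟩
      show Sum.inr z ∈ (δZ.δ p).map Sum.inr
      exact (Part.mem_map_iff _).mpr ⟨z, hp, rfl⟩

/-- The coproduct `f ⊔ g` of two problems. -/
def coprodProblem {X Y Z W : Type*} (f : X → Set Y) (g : Z → Set W) :
    X ⊕ Z → Set (Y ⊕ W)
  | Sum.inl x => Sum.inl '' f x
  | Sum.inr z => Sum.inr '' g z

/-- The meet `f ⊓ g` of two problems. -/
def meetProblem {X Y Z W : Type*} (f : X → Set Y) (g : Z → Set W) :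
    X × Z → Set (Y ⊕ W) :=
  fun xz => Sum.inl '' f xz.1 ∪ Sum.inr '' g xz.2

/-- Representation of the space of sequences `X^ℕ` via the countable tupling. -/
noncomputable def seqRep {X : Type*} (δX : RepSp X) : RepSp (ℕ → X) where
  δ := fun r => Part.mk (∀ i : ℕ, ∃ x, x ∈ δX.δ (proj r i))
    (fun h i => Classical.choose (h i))
  surj := by
    intro x
    choose p hp using fun i => δX.surj (x i)
    refine ⟨fun m => p (Nat.unpair m).1 (Nat.unpair m).2, ?_⟩
    have hproj : ∀ i, proj (fun m => p (Nat.unpair m).1 (Nat.unpair m).2) i = p i := by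
      intro i; funext k; simp [proj]
    have hdom : ∀ i : ℕ, ∃ y, y ∈ δX.δ (proj (fun m => p (Nat.unpair m).1 (Nat.unpair m).2) i) :=
      fun i => ⟨x i, by rw [hproj i]; exact hp i⟩
    refine mem_part_mk hdom ?_
    funext i
    exact Part.mem_unique (Classical.choose_spec (hdom i)) (by rw [hproj i]; exact hp i)

/-- The parallelization `f̂` of a problem. -/
def parallelProblem {X Y : Type*} (f : X → Set Y) : (ℕ → X) → Set (ℕ → Y) :=
  fun x => {y | ∀ i, y i ∈ f (x i)}

/-- Representation of the finite power `Xⁿ` via the countable tupling. -/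
noncomputable def finProdRep (n : ℕ) {X : Type*} (δX : RepSp X) : RepSp (Fin n → X) where
  δ := fun r => Part.mk (∀ i : Fin n, ∃ x, x ∈ δX.δ (proj r i))
    (fun h i => Classical.choose (h i))
  surj := by
    intro x
    choose p hp using fun i => δX.surj (x i)
    classical
    refine ⟨fun m => if h : (Nat.unpair m).1 < n then p ⟨_, h⟩ (Nat.unpair m).2 else 0, ?_⟩
    have hproj : ∀ i : Fin n,
        proj (fun m => if h : (Nat.unpair m).1 < n then p ⟨_, h⟩ (Nat.unpair m).2 else 0) i
          = p i := by
      intro i; funext k; simp [proj, i.isLt]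
    have hdom : ∀ i : Fin n, ∃ y, y ∈ δX.δ
        (proj (fun m => if h : (Nat.unpair m).1 < n then p ⟨_, h⟩ (Nat.unpair m).2 else 0) i) :=
      fun i => ⟨x i, by rw [hproj i]; exact hp i⟩
    refine mem_part_mk hdom ?_
    funext i
    exact Part.mem_unique (Classical.choose_spec (hdom i)) (by rw [hproj i]; exact hp i)

/-- The `n`-fold product `fⁿ` of a problem with itself. -/
def finProdProblem (n : ℕ) {X Y : Type*} (f : X → Set Y) :
    (Fin n → X) → Set (Fin n → Y) :=
  fun x => {y | ∀ i, y i ∈ f (x i)}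

/-- Representation of the space `X*` of words over `X`. -/
noncomputable def starRep {X : Type*} (δX : RepSp X) : RepSp (Σ n : ℕ, Fin n → X) where
  δ := fun r => Part.mk (∀ i : Fin (r 0), ∃ x, x ∈ δX.δ (proj (fun m => r (m + 1)) i))
    (fun h => ⟨r 0, fun i => Classical.choose (h i)⟩)
  surj := by
    rintro ⟨n, x⟩
    choose p hp using fun i => δX.surj (x i)
    classical
    have hproj : ∀ i : Fin n,
        proj (fun m' => if h : (Nat.unpair m').1 < n then p ⟨_, h⟩ (Nat.unpair m').2 else 0) i
          = p i := by
      intro i; funext k; simp [proj, i.isLt]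
    have hdom : ∀ i : Fin n, ∃ y, y ∈ δX.δ
        (proj (fun m' => if h : (Nat.unpair m').1 < n then p ⟨_, h⟩ (Nat.unpair m').2 else 0) i) :=
      fun i => ⟨x i, by rw [hproj i]; exact hp i⟩
    refine ⟨fun m => Nat.casesOn m n
      (fun m' => if h : (Nat.unpair m').1 < n then p ⟨_, h⟩ (Nat.unpair m').2 else 0),
      Part.mem_mk_iff.mpr ⟨hdom, ?_⟩⟩
    have hx : (fun i : Fin n => Classical.choose (hdom i)) = x := funext fun i =>
      Part.mem_unique (Classical.choose_spec (hdom i)) (by rw [hproj i]; exact hp i)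
    exact congrArg (Sigma.mk n) hx

/-- The finite parallelization `f*` of a problem. -/
def starProblem {X Y : Type*} (f : X → Set Y) :
    (Σ n : ℕ, Fin n → X) → Set (Σ n : ℕ, Fin n → Y) :=
  fun x => {y | ∃ e : x.1 = y.1, ∀ i : Fin x.1, y.2 (Fin.cast e i) ∈ f (x.2 i)}

/-- Representation of a countable disjoint union of represented spaces. -/
def csumRep {Z : ℕ → Type*} (δZ : ∀ i, RepSp (Z i)) : RepSp (Σ i, Z i) where
  δ := fun r => ((δZ (r 0)).δ (fun n => r (n + 1))).map fun z => ⟨r 0, z⟩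
  surj := by
    rintro ⟨i, z⟩
    obtain ⟨p, hp⟩ := (δZ i).surj z
    exact ⟨fun n => Nat.casesOn n i p, (Part.mem_map_iff _).mpr ⟨z, hp, rfl⟩⟩

/-- The countable coproduct `⊔ᵢ gᵢ` of a sequence of problems. -/
def csumProblem {Z W : ℕ → Type*} (g : ∀ i, Z i → Set (W i)) :
    (Σ i, Z i) → Set (Σ i, W i) :=
  fun x => Sigma.mk x.1 '' g x.1 x.2

/-! ## Limits and jumps -/

/-- The limit map on Baire space, as a (single-valued) problem:
`lim⟨p₀,p₁,…⟩` is the pointwise limit of the sequence `(pₙ)ₙ`. -/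
def limProblem : (ℕ → ℕ) → Set (ℕ → ℕ) :=
  fun r => {q | ∀ n, ∃ N, ∀ m, N ≤ m → proj r m n = q n}

/-- The limit map on Baire space as a partial (single-valued) function. -/
noncomputable def limP : (ℕ → ℕ) →. (ℕ → ℕ) :=
  fun r => Part.mk (∀ n, ∃ N, ∀ m, N ≤ m → proj r m n = proj r N n)
    (fun h n => proj r (Classical.choose (h n)) n)

/-- The jump `(X′, δ′)` of a represented space: `δ′ := δ ∘ lim`. -/
noncomputable def jumpRep {X : Type*} (δ : RepSp X) : RepSp X where
  δ := fun p => (limP p).bind δ.δ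
  surj := by
    intro x
    obtain ⟨p, hp⟩ := δ.surj x
    refine ⟨fun m => p (Nat.unpair m).2, Part.mem_bind_iff.mpr ⟨p, ?_, hp⟩⟩
    have hproj : ∀ m, proj (fun m => p (Nat.unpair m).2) m = p := by
      intro m; funext k; simp [proj]
    have hdom : ∀ n, ∃ N, ∀ m, N ≤ m →
        proj (fun m => p (Nat.unpair m).2) m n = proj (fun m => p (Nat.unpair m).2) N n :=
      fun n => ⟨0, fun m _ => by rw [hproj m, hproj 0]⟩
    refine mem_part_mk hdom ?_
    funext n
    rw [hproj]

/-! ## Choice problems -/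

/-- The representation of subsets of `ℕ` by enumerations of their complements:
`p` is a name of `A` iff `p` enumerates (via `p m = n + 1`) exactly the `n ∉ A`. -/
def enumNegRep : RepSp (Set ℕ) where
  δ := fun p => Part.some {n | ∀ m, p m ≠ n + 1}
  surj := by
    intro S
    by_cases h : Sᶜ.Nonempty
    · obtain ⟨f, hf⟩ := (Set.to_countable Sᶜ).exists_eq_range h
      refine ⟨fun m => f m + 1, Part.mem_some_iff.mpr ?_⟩
      ext n
      simp only [Set.mem_setOf_eq]
      constructor
      · intro hn m hm
        have hfm : f m ∈ Sᶜ := by rw [hf]; exact ⟨m, rfl⟩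
        have hfmn : f m = n := by omega
        rw [hfmn] at hfm
        exact hfm hn
      · intro hn
        by_contra hS
        have hmem : n ∈ Sᶜ := hS
        rw [hf] at hmem
        obtain ⟨m, hm⟩ := hmem
        exact hn m (by omega)
    · refine ⟨fun _ => 0, Part.mem_some_iff.mpr ?_⟩
      have hS : S = Set.univ := by
        rw [← compl_compl S, Set.not_nonempty_iff_eq_empty.mp h, Set.compl_empty]
      rw [hS]
      ext n
      simp

/-- Choice on the natural numbers: given (a name of) a nonempty set `A ⊆ ℕ`,
find an element of `A`. -/
def CNat : Set ℕ → Set ℕ := fun A => A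

/-- Choice on the finite set `{0, …, k-1}`. -/
def CFin (k : ℕ) : Set ℕ → Set ℕ := fun A => {n | n ∈ A ∧ A ⊆ Set.Iio k}

/-- The limited principle of omniscience as a problem. -/
noncomputable def LPOProblem : (ℕ → ℕ) → Set ℕ :=
  fun p => {if ∃ k, p k = 0 then 1 else 0}


/-- Restriction of a problem on Baire space to a set `A`. -/
def restrictProblem (F : (ℕ → ℕ) → Set (ℕ → ℕ)) (A : Set (ℕ → ℕ)) :
    (ℕ → ℕ) → Set (ℕ → ℕ) :=
  fun p => {q | q ∈ F p ∧ p ∈ A}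

/-- A problem is a fractal if it has a representative on Baire space all of whose
restrictions to clopen sets meeting its domain are Weihrauch equivalent to it. -/
def Fractal {X Y : Type*} (δX : RepSp X) (δY : RepSp Y) (f : X → Set Y) : Prop :=
  ∃ F : (ℕ → ℕ) → Set (ℕ → ℕ),
    WEquiv repBaire repBaire δX δY F f ∧
    ∀ A : Set (ℕ → ℕ), IsClopen A → (A ∩ {p | (F p).Nonempty}).Nonempty →
      WEquiv repBaire repBaire repBaire repBaire (restrictProblem F A) F

/-- A problem `f` is densely realized if for every name `p` of an admissible instance
the set of names of solutions is dense in the domain of the output representation. -/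
def DenselyRealized {X Y : Type*} (δX : RepSp X) (δY : RepSp Y) (f : X → Set Y) : Prop :=
  ∀ p, ∀ x ∈ δX.δ p, (f x).Nonempty →
    {q : ℕ → ℕ | (δY.δ q).Dom} ⊆ closure {q : ℕ → ℕ | ∃ y ∈ δY.δ q, y ∈ f x}

/-- Turing reducibility on Baire space: `a` is computable from `b`. -/
def TRed (a b : ℕ → ℕ) : Prop := ∃ F, BaireComputable F ∧ a ∈ F b

/-- The two-point space `{p, q}` represented by the identity. -/
def pqRep (p q : ℕ → ℕ) : RepSp {r : ℕ → ℕ // r = p ∨ r = q} where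
  δ := fun r => Part.mk (r = p ∨ r = q) (fun h => ⟨r, h⟩)
  surj := fun x => ⟨x.1, Part.mem_mk_iff.mpr ⟨x.2, rfl⟩⟩

/-- The problem `m_A` associated with a set `A ⊆ ℕ`. -/
noncomputable def mProblem (p q : ℕ → ℕ) (A : Set ℕ) :
    ℕ → Set {r : ℕ → ℕ // r = p ∨ r = q} :=
  fun n => {y | y.1 = if n ∈ A then p else q}

/-- The join `A ⊕ B` of two sets of natural numbers. -/
def mJoin (A B : Set ℕ) : Set ℕ :=
  {k | (k % 2 = 0 ∧ k / 2 ∈ A) ∨ (k % 2 = 1 ∧ k / 2 ∈ B)}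

/-- The cardinality `#f` of a problem: the supremum of the cardinalities of sets
`M ⊆ dom f` whose images under `f` are pairwise disjoint. -/
noncomputable def problemCard {X Y : Type} (f : X → Set Y) : Cardinal :=
  sSup {c | ∃ M : Set X, (∀ x ∈ M, (f x).Nonempty) ∧ M.PairwiseDisjoint f ∧
    c = Cardinal.mk M}

/-- Computability of a problem: it has a computable realizer. -/
def ComputableProblem {X Y : Type*} (δX : RepSp X) (δY : RepSp Y) (f : X → Set Y) : Prop :=
  ∃ F, BaireComputable F ∧ Realizes δX δY f F

/-- The minimum function on Baire space. -/
def minProblem : (ℕ → ℕ) → Set ℕ :=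
  fun p => {n | n ∈ Set.range p ∧ ∀ m, n ≤ p m}

/-- The complementary minimum function `minᶜ`. -/
def mincProblem : (ℕ → ℕ) → Set ℕ :=
  fun p => {n | (∀ m, p m ≠ n) ∧ ∀ j, j < n → ∃ m, p m = j}

/-- The maximum function on Baire space (defined on bounded sequences). -/
def maxProblem : (ℕ → ℕ) → Set ℕ :=
  fun p => {n | n ∈ Set.range p ∧ ∀ m, p m ≤ n}

/-!
A realizer of `g` may search, dovetailing over prefixes of its input `p` and finite words `w`,
for a stage at which the outer functional `H` of the reduction already writes its first output
symbol on `⟨p, w⟩`, and answer that symbol. The search terminates because `H` does converge on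
`⟨p, G (K p)⟩` for any realizer `G` of `f`. The symbol found is correct because the names of
solutions of `f` are dense: `w` extends to a correct answer `q` of `f` on the instance `K p`, some
realizer of `f` answers `q` there, and so `H⟨p, q⟩` names a solution of `g`, whose first symbol
is, by continuity, the one found.
-/

@[simp] theorem pref_length (p : ℕ → ℕ) (m : ℕ) : (pref p m).length = m :=
  List.length_ofFn

theorem getElem_pref (p : ℕ → ℕ) {m i : ℕ} (h : i < (pref p m).length) : (pref p m)[i] = p i :=
  List.getElem_ofFn h

theorem take_pref (p : ℕ → ℕ) {m n : ℕ} (h : m ≤ n) : (pref p n).take m = pref p m :=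
  List.ext_getElem (by simp [h]) fun i _ _ => by simp [getElem_pref]

theorem pref_prefix_pref (p : ℕ → ℕ) {m n : ℕ} (h : m ≤ n) : pref p m <+: pref p n := by
  rw [← take_pref p h]
  exact List.take_prefix m _

theorem List.IsPrefix.getElem?_eq_some {α : Type*} {l₁ l₂ : List α} (h : l₁ <+: l₂) {n : ℕ}
    {a : α} (ha : l₁[n]? = some a) : l₂[n]? = some a := by
  obtain ⟨t, rfl⟩ := h
  rw [List.getElem?_append_left (List.getElem?_eq_some_iff.mp ha).1]
  exact ha

def interleave (a b : List ℕ) : List ℕ :=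
  (List.range (2 * min a.length b.length)).map fun i =>
    if i % 2 = 0 then a.getD (i / 2) 0 else b.getD (i / 2) 0

theorem interleave_pref_pref (p q : ℕ → ℕ) (m n : ℕ) :
    interleave (pref p m) (pref q n) = pref (pairB p q) (2 * min m n) := by
  refine List.ext_getElem (by simp [interleave]) fun i hi _ => ?_
  simp only [interleave, List.length_map, List.length_range, pref_length] at hi
  simp only [interleave, pref_length, List.getElem_map, List.getElem_range, getElem_pref, pairB]
  split_ifs <;> rw [List.getD_eq_getElem _ _ (by simp; omega), getElem_pref]

theorem primrec₂_interleave : Primrec₂ interleave := by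
  have getD : Primrec₂ fun (l : List ℕ) (n : ℕ) => l.getD n 0 := Primrec.list_getD 0
  have half : Primrec fun x : (List ℕ × List ℕ) × ℕ => x.2 / 2 :=
    Primrec.nat_div.comp Primrec.snd (Primrec.const 2)
  show Primrec fun x : List ℕ × List ℕ => interleave x.1 x.2
  refine Primrec.list_map
    (f := fun x : List ℕ × List ℕ => List.range (2 * min x.1.length x.2.length))
    (g := fun x i => if i % 2 = 0 then x.1.getD (i / 2) 0 else x.2.getD (i / 2) 0) ?_ ?_
  · exact Primrec.list_range.comp (Primrec.nat_mul.comp (Primrec.const 2)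
      (Primrec.nat_min.comp (Primrec.list_length.comp Primrec.fst)
        (Primrec.list_length.comp Primrec.snd)))
  · exact Primrec.ite (Primrec.eq.comp (Primrec.nat_mod.comp Primrec.snd (Primrec.const 2))
      (Primrec.const 0)) (getD.comp (Primrec.fst.comp Primrec.fst) half)
      (getD.comp (Primrec.snd.comp Primrec.fst) half)

theorem List.findSome?_congr {α β : Type*} {f g : α → Option β} {l : List α}
    (h : ∀ x ∈ l, f x = g x) : l.findSome? f = l.findSome? g := by
  induction l with
  | nil => rfl
  | cons a l ih => simp_all [List.findSome?_cons]

theorem Computable₂.findSome?_range {α β : Type*} [Primcodable α] [Primcodable β]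
    {h : α → ℕ → Option β} (hh : Computable₂ h) :
    Computable₂ fun a n => (List.range n).findSome? (h a) := by
  have step : Computable₂ fun (a : α) (x : ℕ × Option β) => x.2.or (h a x.1) :=
    (Computable.option_casesOn (Computable.snd.comp Computable.snd)
      (hh.comp Computable.fst (Computable.fst.comp Computable.snd))
      (Computable.option_some.comp Computable.snd).to₂).of_eq fun ⟨a, k, o⟩ => by
        cases o <;> rfl
  refine (Computable.nat_rec Computable.snd (Computable.const none)
    (step.comp (Computable.fst.comp Computable.fst) Computable.snd).to₂).to₂.of_eq ?_
  rintro ⟨a, n⟩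
  induction n with
  | zero => rfl
  | succ n ih => simp [List.range_succ, ← ih]

theorem Nat.findSome?_range_eq_of_mem_rfindOpt {α : Type*} {f : ℕ → Option α} {a : α}
    (h : a ∈ Nat.rfindOpt f) : ∃ N, ∀ M, N ≤ M → (List.range M).findSome? f = some a := by
  obtain ⟨n, hn, ha⟩ := Part.mem_bind_iff.mp h
  obtain ⟨-, hmin⟩ := Nat.mem_rfind.mp hn
  have hbefore : ∀ m < n, f m = none := fun m hm => by simpa using hmin hm
  refine ⟨n + 1, fun M hM => ?_⟩
  obtain ⟨k, rfl⟩ := Nat.exists_eq_add_of_le hM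
  rw [List.range_add, List.findSome?_append, List.range_succ, List.findSome?_append,
    List.findSome?_eq_none_iff.mpr fun m hm => hbefore m (List.mem_range.mp hm)]
  have hfn : f n = some a := Part.mem_coe.mp ha
  simp [hfn]

def searchWord (c : List ℕ → ℕ → Option ℕ) (u : List ℕ) : List ℕ :=
  ((List.range u.length).findSome? fun k => c (u.take k) k).elim [] fun n =>
    List.replicate u.length n

section searchWord

variable {c : List ℕ → ℕ → Option ℕ}

theorem searchWord_mono {u v : List ℕ} (h : u <+: v) : searchWord c u <+: searchWord c v := by
  cases hu : (List.range u.length).findSome? fun k => c (u.take k) k with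
  | none => simp [searchWord, hu]
  | some n =>
    have hagree : ∀ k ∈ List.range u.length, c (v.take k) k = c (u.take k) k := fun k hk => by
      rw [List.prefix_iff_eq_take.mp h, List.take_take,
        min_eq_left (List.mem_range.mp hk).le]
    obtain ⟨d, hd⟩ := Nat.exists_eq_add_of_le h.length_le
    have hv : ((List.range v.length).findSome? fun k => c (v.take k) k) = some n := by
      rw [hd, List.range_add, List.findSome?_append, List.findSome?_congr hagree, hu]
      rfl
    simp only [searchWord, hu, hv, Option.elim_some]
    exact ⟨List.replicate d n, by rw [← List.replicate_add, hd]⟩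

theorem exists_searchWord_pref_eq {p : ℕ → ℕ} {n : ℕ}
    (h : n ∈ Nat.rfindOpt fun k => c (pref p k) k) :
    ∃ N, ∀ M, N ≤ M → searchWord c (pref p M) = List.replicate M n := by
  obtain ⟨N, hN⟩ := Nat.findSome?_range_eq_of_mem_rfindOpt h
  refine ⟨N, fun M hM => ?_⟩
  have hagree : ∀ k ∈ List.range M, c ((pref p M).take k) k = c (pref p k) k := fun k hk => by
    rw [take_pref p (List.mem_range.mp hk).le]
  simp only [searchWord, pref_length, List.findSome?_congr hagree, hN M hM, Option.elim_some]

theorem computable_searchWord (hc : Computable₂ c) : Computable (searchWord c) := by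
  have hfind : Computable₂ fun (u : List ℕ) n => (List.range n).findSome? fun k => c (u.take k) k :=
    Computable₂.findSome?_range (hc.comp (Primrec.list_take.to_comp.comp Computable.snd
      Computable.fst) Computable.snd)
  have hreplicate : Primrec₂ fun (u : List ℕ) (n : ℕ) => List.replicate u.length n :=
    (Primrec.list_map (Primrec.list_range.comp (Primrec.list_length.comp Primrec.fst))
      (Primrec.snd.comp Primrec.fst).to₂).of_eq fun x => by simp [List.map_const']
  exact (Computable.option_casesOn (hfind.comp Computable.id Computable.list_length)
    (Computable.const []) hreplicate.to_comp).of_eq fun u => by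
      simp only [searchWord, id]
      cases (List.range u.length).findSome? fun k => c (u.take k) k <;> rfl

theorem baireComputable_rfindOpt_const (hc : Computable₂ c) :
    BaireComputable fun p => (Nat.rfindOpt fun k => c (pref p k) k).map (Function.const ℕ) := by
  refine ⟨searchWord c, computable_searchWord hc, fun u v => searchWord_mono, ?_⟩
  intro p q hq i
  obtain ⟨n, hn, rfl⟩ := Part.mem_map_iff _ |>.mp hq
  obtain ⟨N, hN⟩ := exists_searchWord_pref_eq hn
  refine ⟨max N (i + 1), ?_⟩
  rw [hN _ (le_max_left _ _), List.getElem?_replicate_of_lt (by omega)]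
  rfl

end searchWord

theorem eq_of_getElem?_pref_eq_some {α : Type*} {ψ : List ℕ → List α}
    (hψ : ∀ u v : List ℕ, u <+: v → ψ u <+: ψ v) {x : ℕ → ℕ} {m m' i : ℕ} {a b : α}
    (ha : (ψ (pref x m))[i]? = some a) (hb : (ψ (pref x m'))[i]? = some b) : a = b := by
  have ha' := (hψ _ _ (pref_prefix_pref x (le_max_left m m'))).getElem?_eq_some ha
  have hb' := (hψ _ _ (pref_prefix_pref x (le_max_right m m'))).getElem?_eq_some hb
  exact Option.some.inj (ha'.symm.trans hb')

def RealizesAt {X Y : Type*} (δX : RepSp X) (δY : RepSp Y) (f : X → Set Y) (r q : ℕ → ℕ) :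
    Prop :=
  ∀ x ∈ δX.δ r, (f x).Nonempty → ∃ y ∈ δY.δ q, y ∈ f x

section Realizers

variable {X Y : Type*} {δX : RepSp X} {δY : RepSp Y} {f : X → Set Y}

theorem exists_realizesAt (r : ℕ → ℕ) : ∃ q, RealizesAt δX δY f r q := by
  by_cases h : ∃ x ∈ δX.δ r, (f x).Nonempty
  · obtain ⟨x, hx, y, hy⟩ := h
    obtain ⟨q, hq⟩ := δY.surj y
    exact ⟨q, fun x' hx' _ => ⟨y, hq, Part.mem_unique hx hx' ▸ hy⟩⟩
  · exact ⟨r, fun x hx hfx => (h ⟨x, hx, hfx⟩).elim⟩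

theorem realizes_some {s : (ℕ → ℕ) → ℕ → ℕ} (hs : ∀ r, RealizesAt δX δY f r (s r)) :
    Realizes δX δY f fun r => Part.some (s r) := fun r x hx hfx =>
  ⟨s r, Part.mem_some _, hs r x hx hfx⟩

theorem exists_realizes_eq_some {r q : ℕ → ℕ} (h : RealizesAt δX δY f r q) :
    ∃ G, Realizes δX δY f G ∧ G r = Part.some q := by
  choose s hs using exists_realizesAt (δX := δX) (δY := δY) (f := f)
  refine ⟨_, realizes_some (s := Function.update s r q) fun r' => ?_, by simp⟩
  rcases eq_or_ne r' r with rfl | hne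
  · simpa using h
  · simpa [hne] using hs r'

theorem DenselyRealized.exists_realizesAt_pref_eq (hdense : DenselyRealized δX δY f)
    (htot : ∀ p, (δY.δ p).Dom) (r : ℕ → ℕ) (w : List ℕ) :
    ∃ q, RealizesAt δX δY f r q ∧ pref q w.length = w := by
  let x₀ : ℕ → ℕ := fun k => w.getD k 0
  have hx₀ : ∀ q ∈ PiNat.cylinder x₀ w.length, pref q w.length = w := fun q hq =>
    List.ext_getElem (by simp) fun i hi _ => by
      rw [getElem_pref, hq i (by simpa using hi)]
      exact List.getD_eq_getElem _ _ _
  by_cases h : ∃ x ∈ δX.δ r, (f x).Nonempty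
  · obtain ⟨x, hx, hfx⟩ := h
    have hS : Dense {q | ∃ y ∈ δY.δ q, y ∈ f x} := fun q => hdense r x hx hfx (htot q)
    obtain ⟨q, hqU, y, hy, hyf⟩ :=
      hS.inter_open_nonempty _ (PiNat.isOpen_cylinder _ x₀ _) ⟨x₀, fun _ _ => rfl⟩
    exact ⟨q, fun x' hx' _ => ⟨y, hy, Part.mem_unique hx hx' ▸ hyf⟩, hx₀ q hqU⟩
  · exact ⟨x₀, fun x hx hfx => (h ⟨x, hx, hfx⟩).elim, hx₀ x₀ fun _ _ => rfl⟩

end Realizers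

/-- Stage `⟨m, j⟩` of the search: the first output symbol of `ψ` on the first `m` symbols of
the input interleaved with the `j`-th finite word, read as a guessed prefix of an answer. -/
def guessOutput (ψ : List ℕ → List ℕ) (u : List ℕ) (k : ℕ) : Option ℕ :=
  (ψ (interleave (u.take k.unpair.1) (Denumerable.ofNat (List ℕ) k.unpair.2)))[0]?

theorem computable₂_guessOutput {ψ : List ℕ → List ℕ} (hψ : Computable ψ) :
    Computable₂ (guessOutput ψ) := by
  have hword : Primrec₂ fun (u : List ℕ) (k : ℕ) =>
      interleave (u.take k.unpair.1) (Denumerable.ofNat (List ℕ) k.unpair.2) :=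
    primrec₂_interleave.comp
      (Primrec.list_take.comp (Primrec.fst.comp (Primrec.unpair.comp Primrec.snd)) Primrec.fst)
      ((Primrec.ofNat (List ℕ)).comp (Primrec.snd.comp (Primrec.unpair.comp Primrec.snd)))
  exact Computable.list_getElem?.comp (hψ.comp hword.to_comp) (Computable.const 0)

theorem guessOutput_pref (ψ : List ℕ → List ℕ) (p : ℕ → ℕ) (k : ℕ) :
    guessOutput ψ (pref p k) k =
      (ψ (interleave (pref p k.unpair.1) (Denumerable.ofNat (List ℕ) k.unpair.2)))[0]? := by
  rw [guessOutput, take_pref p (Nat.unpair_left_le k)]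

section Reduction

variable {X Y Z : Type*} {δX : RepSp X} {δY : RepSp Y} {δZ : RepSp Z} {f : X → Set Y}
  {H K : (ℕ → ℕ) →. (ℕ → ℕ)} {p : ℕ → ℕ} {z : Z}

theorem exists_mem_forall_realizesAt {W : Type*} {δW : RepSp W} {g : Z → Set W}
    (hHK : ∀ G, Realizes δX δY f G →
      Realizes δZ δW g fun p => (K p).bind fun r => (G r).bind fun q => H (pairB p q))
    (hz : z ∈ δZ.δ p) (hgz : (g z).Nonempty) :
    ∃ r ∈ K p, ∀ q, RealizesAt δX δY f r q → ∃ q' ∈ H (pairB p q), ∃ w ∈ δW.δ q', w ∈ g z := by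
  choose s hs using exists_realizesAt (δX := δX) (δY := δY) (f := f)
  obtain ⟨_, hmem, -⟩ := hHK _ (realizes_some hs) p z hz hgz
  obtain ⟨r, hr, -⟩ := Part.mem_bind_iff.mp hmem
  refine ⟨r, hr, fun q hq => ?_⟩
  obtain ⟨G, hG, hGr⟩ := exists_realizes_eq_some hq
  obtain ⟨q', hq', hw⟩ := hHK G hG p z hz hgz
  obtain ⟨r', hr', hq'⟩ := Part.mem_bind_iff.mp hq'
  obtain rfl := Part.mem_unique hr' hr
  rw [hGr, Part.bind_some] at hq'
  exact ⟨q', hq', hw⟩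

theorem exists_guessOutput_eq_some {W : Type*} {δW : RepSp W} {g : Z → Set W}
    {ψ : List ℕ → List ℕ} (hψm : ∀ u v : List ℕ, u <+: v → ψ u <+: ψ v)
    (hψH : ∀ p q, q ∈ H p → ∀ n, ∃ m, (ψ (pref p m))[n]? = some (q n))
    (hHK : ∀ G, Realizes δX δY f G →
      Realizes δZ δW g fun p => (K p).bind fun r => (G r).bind fun q => H (pairB p q))
    (hz : z ∈ δZ.δ p) (hgz : (g z).Nonempty) :
    ∃ k n, n ∈ guessOutput ψ (pref p k) k := by
  obtain ⟨r, -, hK⟩ := exists_mem_forall_realizesAt hHK hz hgz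
  obtain ⟨q, hq⟩ := exists_realizesAt (δX := δX) (δY := δY) (f := f) r
  obtain ⟨q', hq', -⟩ := hK q hq
  obtain ⟨m, hm⟩ := hψH _ q' hq' 0
  refine ⟨Nat.pair m (Encodable.encode (pref q m)), q' 0, ?_⟩
  rw [Option.mem_def, guessOutput_pref, Nat.unpair_pair, Denumerable.ofNat_encode,
    interleave_pref_pref, min_self]
  exact (hψm _ _ (pref_prefix_pref _ (by omega))).getElem?_eq_some hm

theorem mem_of_guessOutput_eq_some {g : Z → Set ℕ} {ψ : List ℕ → List ℕ}
    (hψm : ∀ u v : List ℕ, u <+: v → ψ u <+: ψ v)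
    (hψH : ∀ p q, q ∈ H p → ∀ n, ∃ m, (ψ (pref p m))[n]? = some (q n))
    (hHK : ∀ G, Realizes δX δY f G →
      Realizes δZ repNat g fun p => (K p).bind fun r => (G r).bind fun q => H (pairB p q))
    (hdense : DenselyRealized δX δY f) (htot : ∀ p, (δY.δ p).Dom)
    (hz : z ∈ δZ.δ p) (hgz : (g z).Nonempty) {k n : ℕ}
    (hk : guessOutput ψ (pref p k) k = some n) : n ∈ g z := by
  obtain ⟨r, -, hK⟩ := exists_mem_forall_realizesAt hHK hz hgz
  obtain ⟨q, hq, hqw⟩ :=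
    hdense.exists_realizesAt_pref_eq htot r (Denumerable.ofNat (List ℕ) k.unpair.2)
  obtain ⟨q', hq', y, hy, hyg⟩ := hK q hq
  obtain ⟨m, hm⟩ := hψH _ q' hq' 0
  rw [guessOutput_pref, ← hqw, interleave_pref_pref] at hk
  rwa [eq_of_getElem?_pref_eq_some hψm hk hm, ← Part.mem_some_iff.mp hy]

end Reduction

/-- problems with discrete output reducible to densely realized
problems with totally represented output are computable. -/
theorem densely_realized_discrete (X Y Z : Type) (δX : RepSp X) (δY : RepSp Y)
    (δZ : RepSp Z) (f : X → Set Y) (g : Z → Set ℕ)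
    (htot : ∀ p, (δY.δ p).Dom) (hdense : DenselyRealized δX δY f)
    (hred : WRed δZ repNat δX δY g f) :
    ComputableProblem δZ repNat g := by
  obtain ⟨H, K, ⟨ψ, hψ, hψm, hψH⟩, -, hHK⟩ := hred
  refine ⟨_, baireComputable_rfindOpt_const (computable₂_guessOutput hψ), fun p z hz hgz => ?_⟩
  obtain ⟨n, hn⟩ := Part.dom_iff_mem.mp
    (Nat.rfindOpt_dom.mpr (exists_guessOutput_eq_some hψm hψH hHK hz hgz))
  obtain ⟨k, hk⟩ := Nat.rfindOpt_spec hn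
  exact ⟨Function.const ℕ n, Part.mem_map _ hn, n, Part.mem_some n,
    mem_of_guessOutput_eq_some hψm hψH hHK hdense htot hz hgz hk⟩
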